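/- For every integer k > 2 there exists an integer n > k such that every 2-coloring (red/blue) of the edges of the shift graph Sh(n,2) contains a monochromatic subgraph isomorphic to Sh(k,2). (That is, the sequence {Sh(n,2)}_{n>2} of shift graphs is a Ramsey sequence.) -/

import Mathlib

/-- Vertices of the shift graph `Sh(n, 2)`: 2-element subsets `{x₁, x₂}` of `{1, …, n}`,
encoded as ordered pairs `(x₁, x₂)` with `1 ≤ x₁ < x₂ ≤ n`. -/
def ShVert (n : ℕ) : Type :=
  {p : ℕ × ℕ // 1 ≤ p.1 ∧ p.1 < p.2 ∧ p.2 ≤ n}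

/-- The shift graph `Sh(n, 2)`: `{x₁ < x₂}` and `{y₁ < y₂}` are adjacent iff
`x₂ = y₁` or `y₂ = x₁`. -/
def ShiftGraph2 (n : ℕ) : SimpleGraph (ShVert n) where
  Adj p q := p.val.2 = q.val.1 ∨ q.val.2 = p.val.1
  symm := ⟨fun _ _ h => h.symm⟩
  loopless := ⟨by rintro ⟨⟨i, j⟩, h1, h2, h3⟩ h; dsimp at h; omega⟩

/-- `C`-monochromatic copy of `G` in `H` (as a subgraph): an injective map
preserving adjacency such that all images of edges of `G` receive the same color. -/
def HasMonoCopy {V W : Type*} (G : SimpleGraph V) (H : SimpleGraph W)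
    (C : Sym2 W → Bool) : Prop :=
  ∃ f : V → W, Function.Injective f ∧ (∀ u v, G.Adj u v → H.Adj (f u) (f v)) ∧
    ∃ c : Bool, ∀ u v, G.Adj u v → C s(f u, f v) = c

/-!
Colour each increasing triple `x < y < z` by the colour of the edge `{(x, y), (y, z)}` of
`Sh(n, 2)`. By Ramsey's theorem for 3-uniform hypergraphs, for `n` large there is a `k`-set
`H ⊆ {1, …, n}` all of whose triples get the same colour. The increasing bijection
`{1, …, k} → H` maps `Sh(k, 2)` into `Sh(n, 2)`, and every edge of the image comes from a triple
in `H`, so the copy is monochromatic.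

Ramsey's theorem for `(r + 1)`-tuples reduces to `r`-tuples through prehomogeneous sets: set
aside the least element `a`, apply Ramsey for `r`-tuples to `t ↦ c (a, t)` on the rest, and
recurse; a pigeonhole on the colours attached to the least elements then finishes.
-/

open Finset

section Ramsey

variable {α κ : Type*} [LinearOrder α] {r : ℕ}

def IsHomogeneous (c : (Fin r → α) → κ) (H : Finset α) : Prop :=
  ∃ b, ∀ t : Fin r → α, StrictMono t → (∀ i, t i ∈ H) → c t = b

/-- The colour of an increasing tuple from `A` depends only on its least entry, via `g`. -/
def IsPrehomogeneous (c : (Fin (r + 1) → α) → κ) (A : Finset α) (g : α → κ) : Prop :=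
  ∀ a ∈ A, ∀ t : Fin r → α, StrictMono t → (∀ i, t i ∈ A ∧ a < t i) → c (Fin.cons a t) = g a

variable (α κ) in
def IsRamseyBound (r k N : ℕ) : Prop :=
  ∀ S : Finset α, N ≤ #S → ∀ c : (Fin r → α) → κ, ∃ H ⊆ S, #H = k ∧ IsHomogeneous c H

theorem isHomogeneous_fin_zero (c : (Fin 0 → α) → κ) (H : Finset α) : IsHomogeneous c H :=
  ⟨c Fin.elim0, fun _ _ _ => congrArg c (Subsingleton.elim _ _)⟩

theorem IsPrehomogeneous.insert {c : (Fin (r + 1) → α) → κ} {A : Finset α} {g : α → κ}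
    {a : α} {b : κ} (hA : IsPrehomogeneous c A g) (ha : ∀ x ∈ A, a < x)
    (hb : ∀ t : Fin r → α, StrictMono t → (∀ i, t i ∈ A) → c (Fin.cons a t) = b) :
    IsPrehomogeneous c (insert a A) (Function.update g a b) := by
  intro x hx t ht htx
  have hax : a ≤ x := by
    rcases mem_insert.1 hx with rfl | hxA
    exacts [le_rfl, (ha x hxA).le]
  have htA : ∀ i, t i ∈ A := fun i =>
    (mem_insert.1 (htx i).1).resolve_left (hax.trans_lt (htx i).2).ne'
  rcases mem_insert.1 hx with rfl | hxA
  · rw [Function.update_self]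
    exact hb t ht htA
  · rw [Function.update_of_ne (ha x hxA).ne']
    exact hA x hxA t ht fun i => ⟨htA i, (htx i).2⟩

theorem IsPrehomogeneous.isHomogeneous {c : (Fin (r + 1) → α) → κ} {A H : Finset α}
    {g : α → κ} {b : κ} (hA : IsPrehomogeneous c A g) (hH : H ⊆ A) (hg : ∀ x ∈ H, g x = b) :
    IsHomogeneous c H := by
  refine ⟨b, fun t ht htH => ?_⟩
  rw [← Fin.cons_self_tail t, hA _ (hH (htH 0)) (Fin.tail t) (ht.comp Fin.strictMono_succ)
    fun i => ⟨hH (htH _), ht (Fin.succ_pos i)⟩, hg _ (htH 0)]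

theorem exists_isPrehomogeneous [Nonempty κ] (h : ∀ k, ∃ N, IsRamseyBound α κ r k N)
    (m : ℕ) : ∃ N, ∀ S : Finset α, N ≤ #S → ∀ c : (Fin (r + 1) → α) → κ,
      ∃ A ⊆ S, #A = m ∧ ∃ g, IsPrehomogeneous c A g := by
  induction m with
  | zero =>
    exact ⟨0, fun S _ c => ⟨∅, empty_subset _, rfl, fun _ => Classical.arbitrary κ,
      fun a ha => absurd ha (notMem_empty a)⟩⟩
  | succ m ih =>
    obtain ⟨Nm, hNm⟩ := ih
    obtain ⟨N, hN⟩ := h Nm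
    refine ⟨N + 1, fun S hS c => ?_⟩
    have hne : S.Nonempty := card_pos.1 (by omega)
    set a := S.min' hne
    obtain ⟨H, hHS, hHcard, b, hb⟩ := hN (S.erase a)
      (by rw [card_erase_of_mem (S.min'_mem hne)]; omega) fun t => c (Fin.cons a t)
    obtain ⟨A, hAH, hAcard, g, hg⟩ := hNm H hHcard.ge c
    have ha : ∀ x ∈ A, a < x := fun x hx => S.min'_lt_of_mem_erase_min' hne (hHS (hAH hx))
    refine ⟨insert a A, insert_subset (S.min'_mem hne) ((hAH.trans hHS).trans (erase_subset _ _)),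
      ?_, _, hg.insert ha fun t ht htA => hb t ht fun i => hAH (htA i)⟩
    rw [card_insert_of_notMem fun haA => (ha a haA).false, hAcard]

theorem exists_isRamseyBound [Fintype κ] [Nonempty κ] (r k : ℕ) :
    ∃ N, IsRamseyBound α κ r k N := by
  induction r generalizing k with
  | zero =>
    refine ⟨k, fun S hS c => ?_⟩
    obtain ⟨H, hHS, hH⟩ := exists_subset_card_eq hS
    exact ⟨H, hHS, hH, isHomogeneous_fin_zero c H⟩
  | succ r ih =>
    classical
    obtain ⟨N, hN⟩ := exists_isPrehomogeneous ih (Fintype.card κ * k)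
    refine ⟨N, fun S hS c => ?_⟩
    obtain ⟨A, hAS, hAcard, g, hg⟩ := hN S hS c
    obtain ⟨b, -, hb⟩ := exists_le_card_fiber_of_mul_le_card_of_maps_to (f := g)
      (fun _ _ => mem_univ _) univ_nonempty (by rw [card_univ, hAcard])
    obtain ⟨H, hHA, hH⟩ := exists_subset_card_eq hb
    have hHA' : H ⊆ A := hHA.trans (filter_subset _ _)
    exact ⟨H, hHA'.trans hAS, hH, hg.isHomogeneous hHA' fun x hx => (mem_filter.1 (hHA hx)).2⟩

end Ramsey

theorem exists_strictMonoOn_mapsTo_of_card_eq {s : Finset ℕ} {k : ℕ} (hs : #s = k) :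
    ∃ e : ℕ → ℕ, StrictMonoOn e (Set.Icc 1 k) ∧ Set.MapsTo e (Set.Icc 1 k) s := by
  refine ⟨fun x => if h : x - 1 < k then s.orderEmbOfFin hs ⟨x - 1, h⟩ else 0, ?_, ?_⟩
  · intro x hx y hy hxy
    simp only [Set.mem_Icc] at hx hy
    simp only [dif_pos (show x - 1 < k by omega), dif_pos (show y - 1 < k by omega)]
    exact (s.orderEmbOfFin hs).strictMono (Fin.mk_lt_mk.2 (by omega))
  · intro x hx
    simp only [Set.mem_Icc] at hx
    simp only [dif_pos (show x - 1 < k by omega), mem_coe]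
    exact s.orderEmbOfFin_mem hs _

namespace ShVert

variable {k n : ℕ}

theorem fst_mem_Icc (p : ShVert n) : p.1.1 ∈ Set.Icc 1 n :=
  ⟨p.2.1, (p.2.2.1.trans_le p.2.2.2).le⟩

theorem snd_mem_Icc (p : ShVert n) : p.1.2 ∈ Set.Icc 1 n :=
  ⟨p.2.1.trans p.2.2.1.le, p.2.2.2⟩

def map (e : ℕ → ℕ) (he : StrictMonoOn e (Set.Icc 1 k))
    (hmaps : Set.MapsTo e (Set.Icc 1 k) (Set.Icc 1 n)) (p : ShVert k) : ShVert n :=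
  ⟨(e p.1.1, e p.1.2), (hmaps p.fst_mem_Icc).1, he p.fst_mem_Icc p.snd_mem_Icc p.2.2.1,
    (hmaps p.snd_mem_Icc).2⟩

theorem map_injective {e : ℕ → ℕ} (he : StrictMonoOn e (Set.Icc 1 k))
    (hmaps : Set.MapsTo e (Set.Icc 1 k) (Set.Icc 1 n)) : Function.Injective (map e he hmaps) :=
  fun p q hpq => Subtype.ext <| Prod.ext
    (he.injOn p.fst_mem_Icc q.fst_mem_Icc (congrArg (·.1.1) hpq))
    (he.injOn p.snd_mem_Icc q.snd_mem_Icc (congrArg (·.1.2) hpq))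

end ShVert

namespace ShiftGraph2

variable {k n : ℕ}

theorem map_adj {e : ℕ → ℕ} (he : StrictMonoOn e (Set.Icc 1 k))
    (hmaps : Set.MapsTo e (Set.Icc 1 k) (Set.Icc 1 n)) {p q : ShVert k}
    (h : (ShiftGraph2 k).Adj p q) : (ShiftGraph2 n).Adj (p.map e he hmaps) (q.map e he hmaps) :=
  h.imp (congrArg e) (congrArg e)

/-- Tuples that are not of the form `1 ≤ t 0 < t 1 < t 2 ≤ n` get the junk colour `false`. -/
def tripleColoring (n : ℕ) (C : Sym2 (ShVert n) → Bool) (t : Fin 3 → ℕ) : Bool :=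
  if h : 1 ≤ t 0 ∧ t 0 < t 1 ∧ t 1 < t 2 ∧ t 2 ≤ n then
    C s(⟨(t 0, t 1), h.1, h.2.1, by omega⟩, ⟨(t 1, t 2), by omega, h.2.2.1, h.2.2.2⟩)
  else false

theorem tripleColoring_eq (C : Sym2 (ShVert n) → Bool) {u v : ShVert n} (h : u.1.2 = v.1.1) :
    tripleColoring n C ![u.1.1, u.1.2, v.1.2] = C s(u, v) := by
  have hu := u.2
  have hv := v.2
  rw [tripleColoring, dif_pos (by simp only [Matrix.cons_val]; omega)]
  congr

theorem color_eq_of_isHomogeneous {C : Sym2 (ShVert n) → Bool} {H : Finset ℕ} {b : Bool}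
    (hb : ∀ t : Fin 3 → ℕ, StrictMono t → (∀ i, t i ∈ H) → tripleColoring n C t = b)
    {u v : ShVert n} (huv : u.1.2 = v.1.1) (hu₁ : u.1.1 ∈ H) (hu₂ : u.1.2 ∈ H) (hv₂ : v.1.2 ∈ H) :
    C s(u, v) = b := by
  rw [← tripleColoring_eq C huv]
  refine hb _ (((Subsingleton.strictMono (α := Fin 1) _).vecCons ?_).vecCons u.2.2.1) ?_
  · exact huv ▸ v.2.2.1
  · intro i
    fin_cases i
    exacts [hu₁, hu₂, hv₂]

theorem hasMonoCopy_of_isHomogeneous {C : Sym2 (ShVert n) → Bool} {H : Finset ℕ}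
    (hHn : H ⊆ Finset.Icc 1 n) (hH : #H = k) (hom : IsHomogeneous (tripleColoring n C) H) :
    HasMonoCopy (ShiftGraph2 k) (ShiftGraph2 n) C := by
  obtain ⟨e, he, heH⟩ := exists_strictMonoOn_mapsTo_of_card_eq hH
  have hmaps : Set.MapsTo e (Set.Icc 1 k) (Set.Icc 1 n) := fun x hx => by
    simpa using hHn (heH hx)
  obtain ⟨b, hb⟩ := hom
  have hcolor : ∀ u v : ShVert k, u.1.2 = v.1.1 → C s(u.map e he hmaps, v.map e he hmaps) = b :=
    fun u v huv => color_eq_of_isHomogeneous hb (congrArg e huv)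
      (heH u.fst_mem_Icc) (heH u.snd_mem_Icc) (heH v.snd_mem_Icc)
  exact ⟨ShVert.map e he hmaps, ShVert.map_injective he hmaps, fun u v => map_adj he hmaps, b,
    fun u v huv => huv.elim (hcolor u v) fun h => Sym2.eq_swap ▸ hcolor v u h⟩

end ShiftGraph2

theorem shiftGraph2_ramsey_sequence_general (k : ℕ) :
    ∃ n : ℕ, n > k ∧
      ∀ C : Sym2 (ShVert n) → Bool, HasMonoCopy (ShiftGraph2 k) (ShiftGraph2 n) C := by
  obtain ⟨N, hN⟩ := exists_isRamseyBound (α := ℕ) (κ := Bool) 3 k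
  refine ⟨N + k + 1, by omega, fun C => ?_⟩
  obtain ⟨H, hHS, hH, hom⟩ := hN (Finset.Icc 1 (N + k + 1))
    (by rw [Nat.card_Icc]; omega) (ShiftGraph2.tripleColoring _ C)
  exact ShiftGraph2.hasMonoCopy_of_isHomogeneous hHS hH hom

/-- The sequence `{Sh(n, 2)}_{n > 2}` of shift graphs is a Ramsey sequence: for every `k > 2`
there is `n > k` such that every red-blue edge coloring of `Sh(n, 2)` contains a monochromatic
subgraph isomorphic to `Sh(k, 2)`. -/
theorem shiftGraph2_ramsey_sequence (k : ℕ) (hk : 2 < k) :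
    ∃ n : ℕ, n > k ∧
      ∀ C : Sym2 (ShVert n) → Bool, HasMonoCopy (ShiftGraph2 k) (ShiftGraph2 n) C :=
  shiftGraph2_ramsey_sequence_general k
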